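/- arXiv:2304.11881 — 7 statements merged into one kernel-verified Lean document; each statement's English description precedes it below -/
import Mathlib

section
/- Let λ_T, λ_U, w > 0 and c ∈ ℝ, and define f : (0,∞) → ℝ by f(r) = λ_T π r² (log w + c − log(λ_U π r³) + 1/2). Then r* = (w e^{c−1}/(λ_U π))^{1/3} is the unique maximizer of f on (0,∞), and f(r*) = (3/2) e^{−2/3} λ_T (e^{2c} π w² / λ_U²)^{1/3}. -/
open Real

private lemma cube_root_pow (a : ℝ) (ha : 0 ≤ a) : (a ^ ((1:ℝ)/3)) ^ 3 = a := by
  rw [show ((1:ℝ)/3) = ((3:ℕ):ℝ)⁻¹ by norm_num,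
    Real.rpow_inv_natCast_pow ha (by norm_num)]

/-- The approximate expected user strength
`f(r) = λ_T π r² (log w + c − log(λ_U π r³) + 1/2)` has the unique maximizer
`r* = (w e^{c−1}/(λ_U π))^{1/3}` on `(0, ∞)`, with optimal value
`f(r*) = (3/2) e^{−2/3} λ_T (e^{2c} π w² / λ_U²)^{1/3}`. -/
theorem optimal_radius_and_strength
    (lamT lamU w : ℝ) (hT : 0 < lamT) (hU : 0 < lamU) (hw : 0 < w) (c : ℝ)
    (f : ℝ → ℝ)
    (hf : ∀ r, f r = lamT * π * r ^ 2 *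
      (Real.log w + c - Real.log (lamU * π * r ^ 3) + 1 / 2))
    (rstar : ℝ)
    (hrstar : rstar = (w * Real.exp (c - 1) / (lamU * π)) ^ ((1 : ℝ) / 3)) :
    (0 < rstar ∧ ∀ r, 0 < r → r ≠ rstar → f r < f rstar) ∧
      f rstar = 3 / 2 * Real.exp (-(2 : ℝ) / 3) * lamT *
        (Real.exp (2 * c) * π * w ^ 2 / lamU ^ 2) ^ ((1 : ℝ) / 3) := by
  have hpi := Real.pi_pos
  have hUp : 0 < lamU * π := by positivity
  have hbase : 0 < w * Real.exp (c - 1) / (lamU * π) := by positivity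
  have hr : 0 < rstar := by rw [hrstar]; positivity
  have hcube : rstar ^ 3 = w * Real.exp (c - 1) / (lamU * π) := by
    rw [hrstar]; exact cube_root_pow _ hbase.le
  have hlogstar : Real.log (lamU * π * rstar ^ 3) = Real.log w + (c - 1) := by
    rw [hcube, mul_div_cancel₀ _ hUp.ne',
      Real.log_mul hw.ne' (Real.exp_ne_zero _), Real.log_exp]
  have hfstar : f rstar = lamT * π * rstar ^ 2 * (3 / 2) := by
    rw [hf, hlogstar]; ring
  -- expansion of log at rstar
  have hlsr : Real.log (lamU * π) + 3 * Real.log rstar = Real.log w + c - 1 := by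
    have h1 : Real.log (lamU * π * rstar ^ 3)
        = Real.log (lamU * π) + 3 * Real.log rstar := by
      rw [Real.log_mul hUp.ne' (by positivity), Real.log_pow]
      push_cast; ring
    linarith [h1.symm.trans hlogstar]
  constructor
  · refine ⟨hr, fun r hr' hne => ?_⟩
    have hlogr : Real.log (lamU * π * r ^ 3)
        = Real.log (lamU * π) + 3 * Real.log r := by
      rw [Real.log_mul hUp.ne' (by positivity), Real.log_pow]
      push_cast; ring
    set x := Real.log r - Real.log rstar with hx
    have hxne : x ≠ 0 := by
      intro h
      apply hne
      have : Real.log r = Real.log rstar := by linarith [hx ▸ h]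
      calc r = Real.exp (Real.log r) := (Real.exp_log hr').symm
        _ = Real.exp (Real.log rstar) := by rw [this]
        _ = rstar := Real.exp_log hr
    -- key inequality
    have hkey : Real.exp (2 * x) * (3 / 2 - 3 * x) < 3 / 2 := by
      have h1 : (-(2 * x)) + 1 < Real.exp (-(2 * x)) :=
        Real.add_one_lt_exp (by intro h; apply hxne; linarith)
      have h2 : 0 < Real.exp (2 * x) := Real.exp_pos _
      have h3 : Real.exp (2 * x) * Real.exp (-(2 * x)) = 1 := by
        rw [← Real.exp_add]; simp
      nlinarith
    have hr2 : r ^ 2 = Real.exp (2 * x) * Real.exp (2 * Real.log rstar) := by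
      rw [← Real.exp_add]
      have : 2 * x + 2 * Real.log rstar = 2 * Real.log r := by rw [hx]; ring
      rw [this, show (2:ℝ) * Real.log r = (2:ℕ) * Real.log r by norm_num,
        Real.exp_nat_mul, Real.exp_log hr']
    have hrs2 : rstar ^ 2 = Real.exp (2 * Real.log rstar) := by
      rw [show (2:ℝ) * Real.log rstar = (2:ℕ) * Real.log rstar by norm_num,
        Real.exp_nat_mul, Real.exp_log hr]
    have hfr : f r = lamT * π * (Real.exp (2 * x) * Real.exp (2 * Real.log rstar))
        * (3 / 2 - 3 * x) := by
      rw [hf, hlogr, ← hr2]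
      have : Real.log w + c - (Real.log (lamU * π) + 3 * Real.log r) + 1 / 2
          = 3 / 2 - 3 * x := by rw [hx]; linarith
      rw [this]
    rw [hfr, hfstar, hrs2]
    have hpos : 0 < lamT * π * Real.exp (2 * Real.log rstar) := by positivity
    nlinarith
  · -- value computation
    rw [hfstar]
    have hB : 0 < Real.exp (2 * c) * π * w ^ 2 / lamU ^ 2 := by positivity
    set R := (Real.exp (2 * c) * π * w ^ 2 / lamU ^ 2) ^ ((1:ℝ)/3) with hR
    have hRpos : 0 < R := by rw [hR]; positivity
    have hRcube : R ^ 3 = Real.exp (2 * c) * π * w ^ 2 / lamU ^ 2 := by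
      rw [hR]; exact cube_root_pow _ hB.le
    have hL : 0 ≤ π * rstar ^ 2 := by positivity
    have hR' : 0 ≤ Real.exp (-(2:ℝ)/3) * R := by positivity
    have hcubes : (π * rstar ^ 2) ^ 3 = (Real.exp (-(2:ℝ)/3) * R) ^ 3 := by
      have he : Real.exp (-(2:ℝ)/3) ^ 3 = Real.exp (-2) := by
        rw [← Real.exp_nat_mul]; norm_num
      have hec : Real.exp (c - 1) ^ 2 = Real.exp (2 * c) * Real.exp (-2) := by
        rw [← Real.exp_nat_mul, ← Real.exp_add]; ring_nf
      have h6 : (rstar ^ 2) ^ 3 = (rstar ^ 3) ^ 2 := by ring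
      rw [mul_pow, h6, hcube, mul_pow, he, hRcube, div_pow, mul_pow, hec]
      field_simp
    have habs : π * rstar ^ 2 = Real.exp (-(2:ℝ)/3) * R :=
      (pow_left_inj₀ hL hR' (by norm_num : (3:ℕ) ≠ 0)).mp hcubes
    nlinarith [habs]
end

section
/- Fix p ∈ [0,1), λ_U > 0 and w > 0. For each integer N ≥ 2 let B_N be a binomially distributed random variable with N−1 trials and success probability p, let c_N = E[log(1 + B_N)] / (1 + (1−p)(N−1)), and let r^{opt}_N = (w e^{−1 + c_N} / (N λ_U π))^{1/3}. Then N^{1/3} · r^{opt}_N → (w/(λ_U π e))^{1/3} as N → ∞. -/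
open Real Filter

/-- With `B_N ~ Binomial(N−1, p)`, `c_N = E[log(1+B_N)]/(1+(1−p)(N−1))` and
`r^{opt}_N = (w e^{−1+c_N}/(N λ_U π))^{1/3}`, we have
`N^{1/3} r^{opt}_N → (w/(λ_U π e))^{1/3}` as `N → ∞`. -/
theorem scaling_optimal_radius
    (p : ℝ) (hp0 : 0 ≤ p) (hp1 : p < 1) (lamU w : ℝ) (hU : 0 < lamU) (hw : 0 < w)
    (c : ℕ → ℝ)
    (hc : ∀ N : ℕ, 2 ≤ N → c N =
      (∑ k ∈ Finset.range N,
        ((N - 1).choose k : ℝ) * p ^ k * (1 - p) ^ (N - 1 - k) * Real.log (1 + k)) /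
      (1 + (1 - p) * ((N : ℝ) - 1)))
    (r : ℕ → ℝ)
    (hr : ∀ N : ℕ, 2 ≤ N → r N =
      (w * Real.exp (-1 + c N) / (N * lamU * π)) ^ ((1 : ℝ) / 3)) :
    Tendsto (fun N : ℕ => (N : ℝ) ^ ((1 : ℝ) / 3) * r N) atTop
      (nhds ((w / (lamU * π * Real.exp 1)) ^ ((1 : ℝ) / 3))) := by
  have hp' : (0:ℝ) < 1 - p := by linarith
  have hden : ∀ N : ℕ, 2 ≤ N → 0 < 1 + (1 - p) * ((N : ℝ) - 1) := by
    intro N hN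
    have h1 : (1:ℝ) ≤ (N:ℝ) := by exact_mod_cast Nat.one_le_of_lt hN
    nlinarith
  -- sum of binomial pmf is 1
  have hsum1 : ∀ N : ℕ, 2 ≤ N →
      (∑ k ∈ Finset.range N, ((N - 1).choose k : ℝ) * p ^ k * (1 - p) ^ (N - 1 - k)) = 1 := by
    intro N hN
    have hN1 : N - 1 + 1 = N := by omega
    calc ∑ k ∈ Finset.range N, ((N - 1).choose k : ℝ) * p ^ k * (1 - p) ^ (N - 1 - k)
        = ∑ k ∈ Finset.range (N - 1 + 1),
            p ^ k * (1 - p) ^ (N - 1 - k) * ((N - 1).choose k : ℝ) := by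
          rw [hN1]; exact Finset.sum_congr rfl fun k _ => by ring
      _ = (p + (1 - p)) ^ (N - 1) := (add_pow p (1 - p) (N - 1)).symm
      _ = 1 := by norm_num
  -- bounds on c
  have hclb : ∀ N : ℕ, 2 ≤ N → 0 ≤ c N := by
    intro N hN
    rw [hc N hN]
    apply div_nonneg _ (hden N hN).le
    apply Finset.sum_nonneg
    intro k _
    have h1 : (0:ℝ) ≤ Real.log (1 + k) := Real.log_nonneg (le_add_of_nonneg_right (Nat.cast_nonneg k))
    positivity
  have hcub : ∀ N : ℕ, 2 ≤ N → c N ≤ Real.log N / (1 + (1 - p) * ((N : ℝ) - 1)) := by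
    intro N hN
    rw [hc N hN]
    have hnum : (∑ k ∈ Finset.range N,
        ((N - 1).choose k : ℝ) * p ^ k * (1 - p) ^ (N - 1 - k) * Real.log (1 + k))
        ≤ Real.log N := by
      calc (∑ k ∈ Finset.range N,
            ((N - 1).choose k : ℝ) * p ^ k * (1 - p) ^ (N - 1 - k) * Real.log (1 + k))
          ≤ ∑ k ∈ Finset.range N,
            ((N - 1).choose k : ℝ) * p ^ k * (1 - p) ^ (N - 1 - k) * Real.log N := by
            apply Finset.sum_le_sum
            intro k hk
            have hk' : (k:ℝ) + 1 ≤ N := by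
              have := Finset.mem_range.mp hk
              exact_mod_cast Nat.succ_le_of_lt this
            have hlog : Real.log (1 + k) ≤ Real.log N :=
              Real.log_le_log (by positivity) (by linarith)
            have hcoef : (0:ℝ) ≤ ((N - 1).choose k : ℝ) * p ^ k * (1 - p) ^ (N - 1 - k) := by
              positivity
            exact mul_le_mul_of_nonneg_left hlog hcoef
        _ = Real.log N := by rw [← Finset.sum_mul, hsum1 N hN, one_mul]
    exact div_le_div_of_nonneg_right hnum (hden N hN).le
  -- c tends to 0
  have hlogN : Tendsto (fun N : ℕ => Real.log N / (N:ℝ)) atTop (nhds 0) :=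
    (Real.isLittleO_log_id_atTop.tendsto_div_nhds_zero).comp tendsto_natCast_atTop_atTop
  have hub0 : Tendsto (fun N : ℕ => (1 - p)⁻¹ * (Real.log N / (N:ℝ))) atTop (nhds 0) := by
    have := hlogN.const_mul (1 - p)⁻¹
    rwa [mul_zero] at this
  have hc0 : Tendsto c atTop (nhds 0) := by
    apply tendsto_of_tendsto_of_tendsto_of_le_of_le' tendsto_const_nhds hub0
    · filter_upwards [eventually_ge_atTop 2] with N hN using hclb N hN
    · filter_upwards [eventually_ge_atTop 2] with N hN
      have hNR : (2:ℝ) ≤ (N:ℝ) := by exact_mod_cast hN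
      have hD := hden N hN
      have hlogpos : 0 ≤ Real.log N := Real.log_nonneg (by linarith)
      have h1 : Real.log N / (1 + (1 - p) * ((N:ℝ) - 1)) ≤ Real.log N / ((1 - p) * N) := by
        apply div_le_div_of_nonneg_left hlogpos (by nlinarith) (by nlinarith)
      have h2 : Real.log N / ((1 - p) * N) = (1 - p)⁻¹ * (Real.log N / N) := by
        field_simp
      calc c N ≤ _ := hcub N hN
        _ ≤ _ := h1
        _ = _ := h2
  -- rewrite the function eventually
  have hkey : ∀ᶠ N : ℕ in atTop,
      (w * Real.exp (-1 + c N) / (lamU * π)) ^ ((1:ℝ)/3) = (N:ℝ) ^ ((1:ℝ)/3) * r N := by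
    filter_upwards [eventually_ge_atTop 2] with N hN
    have hNpos : (0:ℝ) < N := by
      have : 0 < N := by omega
      exact_mod_cast this
    rw [hr N hN]
    have hA : (0:ℝ) < w * Real.exp (-1 + c N) / (lamU * π) := by positivity
    have hE : w * Real.exp (-1 + c N) / ((N:ℝ) * lamU * π)
        = (w * Real.exp (-1 + c N) / (lamU * π)) / N := by
      field_simp
    rw [hE, Real.div_rpow hA.le hNpos.le]
    have hne : ((N:ℝ) ^ ((1:ℝ)/3)) ≠ 0 := (Real.rpow_pos_of_pos hNpos _).ne'
    field_simp
  have hexp : Tendsto (fun N : ℕ => Real.exp (-1 + c N)) atTop (nhds (Real.exp (-1))) := by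
    have h : Tendsto (fun N : ℕ => -1 + c N) atTop (nhds (-1 + 0)) :=
      tendsto_const_nhds.add hc0
    rw [add_zero] at h
    exact (Real.continuous_exp.tendsto _).comp h
  have h1 : Tendsto (fun N : ℕ => w * Real.exp (-1 + c N) / (lamU * π)) atTop
      (nhds (w * Real.exp (-1) / (lamU * π))) := (hexp.const_mul w).div_const _
  have h2 := h1.rpow_const (Or.inr (by norm_num : (0:ℝ) ≤ 1/3))
  have heq : w * Real.exp (-1) / (lamU * π) = w / (lamU * π * Real.exp 1) := by
    rw [Real.exp_neg]
    field_simp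
    try exact Or.inl (by ring)
  rw [heq] at h2
  exact h2.congr' hkey
end

section
/- Fix p ∈ [0,1), λ_BS, λ_U, w > 0. For each integer N ≥ 2 let B_N ~ Binomial(N−1, p), let c_N = E[log(1 + B_N)] / (1 + (1−p)(N−1)), and let S_N = (3/2) e^{−2/3} (1 + (1−p)(N−1)) λ_BS · (e^{2 c_N} π w² / (N λ_U)²)^{1/3}. Then S_N / (N^{1/3} · (3/2) e^{−2/3} λ_BS (π w² / λ_U²)^{1/3}) → 1 − p as N → ∞. -/
open Real Filter

/-- With `B_N ~ Binomial(N−1, p)`, `c_N = E[log(1+B_N)]/(1+(1−p)(N−1))` and optimal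
strength `S_N = (3/2) e^{−2/3} (1+(1−p)(N−1)) λ_BS (e^{2c_N} π w²/(N λ_U)²)^{1/3}`,
the ratio `S_N / (N^{1/3} (3/2) e^{−2/3} λ_BS (π w²/λ_U²)^{1/3})` tends to `1 − p`. -/
theorem scaling_optimal_strength
    (p : ℝ) (hp0 : 0 ≤ p) (hp1 : p < 1)
    (lamBS lamU w : ℝ) (hBS : 0 < lamBS) (hU : 0 < lamU) (hw : 0 < w)
    (c : ℕ → ℝ)
    (hc : ∀ N : ℕ, 2 ≤ N → c N =
      (∑ k ∈ Finset.range N,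
        ((N - 1).choose k : ℝ) * p ^ k * (1 - p) ^ (N - 1 - k) * Real.log (1 + k)) /
      (1 + (1 - p) * ((N : ℝ) - 1)))
    (S : ℕ → ℝ)
    (hS : ∀ N : ℕ, 2 ≤ N → S N =
      3 / 2 * Real.exp (-(2 : ℝ) / 3) * (1 + (1 - p) * ((N : ℝ) - 1)) * lamBS *
        (Real.exp (2 * c N) * π * w ^ 2 / ((N : ℝ) * lamU) ^ 2) ^ ((1 : ℝ) / 3)) :
    Tendsto
      (fun N : ℕ => S N /
        ((N : ℝ) ^ ((1 : ℝ) / 3) * (3 / 2 * Real.exp (-(2 : ℝ) / 3) * lamBS *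
          (π * w ^ 2 / lamU ^ 2) ^ ((1 : ℝ) / 3))))
      atTop (nhds (1 - p)) := by
  have h1p : (0:ℝ) < 1 - p := by linarith
  have hden : ∀ N : ℕ, 2 ≤ N → (1-p) * (N:ℝ) ≤ 1 + (1 - p) * ((N : ℝ) - 1) := by
    intro N hN; nlinarith
  have hdenpos : ∀ N : ℕ, 2 ≤ N → (0:ℝ) < 1 + (1 - p) * ((N : ℝ) - 1) := by
    intro N hN
    have : (2:ℝ) ≤ (N:ℝ) := by exact_mod_cast hN
    nlinarith
  have hc0 : ∀ N : ℕ, 2 ≤ N → 0 ≤ c N := by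
    intro N hN
    rw [hc N hN]
    apply div_nonneg _ (hdenpos N hN).le
    apply Finset.sum_nonneg
    intro k hk
    have h1 : (0:ℝ) ≤ Real.log (1 + k) :=
      Real.log_nonneg (le_add_of_nonneg_right (Nat.cast_nonneg k))
    have h2 : (0:ℝ) ≤ ((N - 1).choose k : ℝ) * p ^ k * (1 - p) ^ (N - 1 - k) := by
      positivity
    exact mul_nonneg h2 h1
  have hcub : ∀ N : ℕ, 2 ≤ N → c N ≤ Real.log N / ((1-p) * N) := by
    intro N hN
    have h1N : (1:ℝ) ≤ (N:ℝ) := by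
      have : 1 ≤ N := by omega
      exact_mod_cast this
    have hNpos : (0:ℝ) < (N:ℝ) := by linarith
    have hlogN : (0:ℝ) ≤ Real.log N := Real.log_nonneg h1N
    rw [hc N hN]
    have hsum : (∑ k ∈ Finset.range N,
        ((N - 1).choose k : ℝ) * p ^ k * (1 - p) ^ (N - 1 - k) * Real.log (1 + k))
        ≤ Real.log N := by
      calc (∑ k ∈ Finset.range N,
          ((N - 1).choose k : ℝ) * p ^ k * (1 - p) ^ (N - 1 - k) * Real.log (1 + k))
          ≤ ∑ k ∈ Finset.range N,
            ((N - 1).choose k : ℝ) * p ^ k * (1 - p) ^ (N - 1 - k) * Real.log N := by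
            apply Finset.sum_le_sum
            intro k hk
            have hk' : k + 1 ≤ N := Finset.mem_range.mp hk
            have hlog : Real.log (1 + k) ≤ Real.log N := by
              apply Real.log_le_log (by positivity)
              have : (k:ℝ) + 1 ≤ (N:ℝ) := by exact_mod_cast hk'
              linarith
            have hnn : (0:ℝ) ≤ ((N - 1).choose k : ℝ) * p ^ k * (1 - p) ^ (N - 1 - k) := by
              positivity
            exact mul_le_mul_of_nonneg_left hlog hnn
        _ = Real.log N := by
            rw [← Finset.sum_mul]
            have hbin : (∑ k ∈ Finset.range N,
                ((N - 1).choose k : ℝ) * p ^ k * (1 - p) ^ (N - 1 - k)) = 1 := by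
              have h := add_pow p (1-p) (N-1)
              have hN1 : N - 1 + 1 = N := by omega
              rw [hN1] at h
              simp only [add_sub_cancel, one_pow] at h
              rw [show (∑ k ∈ Finset.range N,
                  ((N - 1).choose k : ℝ) * p ^ k * (1 - p) ^ (N - 1 - k)) =
                ∑ k ∈ Finset.range N, p ^ k * (1 - p) ^ (N - 1 - k) * ((N - 1).choose k : ℝ)
                from Finset.sum_congr rfl (fun k _ => by ring), ← h]
            rw [hbin, one_mul]
    exact div_le_div₀ hlogN hsum (by positivity) (hden N hN)
  -- c → 0
  have hctend : Tendsto c atTop (nhds 0) := by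
    have hup : Tendsto (fun N : ℕ => Real.log N / ((1-p) * N)) atTop (nhds 0) := by
      have h1 : Tendsto (fun x : ℝ => Real.log x / x) atTop (nhds 0) :=
        Real.isLittleO_log_id_atTop.tendsto_div_nhds_zero
      have h2 : Tendsto (fun N : ℕ => Real.log N / N) atTop (nhds 0) :=
        h1.comp tendsto_natCast_atTop_atTop
      have h3 := h2.const_mul ((1-p)⁻¹)
      rw [mul_zero] at h3
      refine h3.congr' ?_
      filter_upwards [eventually_gt_atTop 0] with N hN
      have hNpos : (0:ℝ) < (N:ℝ) := by exact_mod_cast hN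
      field_simp
    refine squeeze_zero' ?_ ?_ hup
    · filter_upwards [eventually_ge_atTop 2] with N hN using hc0 N hN
    · filter_upwards [eventually_ge_atTop 2] with N hN using hcub N hN
  -- ratio rewrite
  have hratio : ∀ᶠ N : ℕ in atTop,
      S N / ((N : ℝ) ^ ((1 : ℝ) / 3) * (3 / 2 * Real.exp (-(2 : ℝ) / 3) * lamBS *
          (π * w ^ 2 / lamU ^ 2) ^ ((1 : ℝ) / 3)))
      = ((1 - p) + p / N) * Real.exp (2 * c N / 3) := by
    filter_upwards [eventually_ge_atTop 2] with N hN
    have hNpos : (0:ℝ) < (N:ℝ) := by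
      have : 0 < N := by omega
      exact_mod_cast this
    rw [hS N hN]
    have key : (Real.exp (2 * c N) * π * w ^ 2 / ((N : ℝ) * lamU) ^ 2) ^ ((1:ℝ)/3)
        = Real.exp (2 * c N / 3) * (π * w ^ 2 / lamU ^ 2) ^ ((1:ℝ)/3)
            / (N:ℝ) ^ ((2:ℝ)/3) := by
      rw [show Real.exp (2 * c N) * π * w ^ 2 / ((N : ℝ) * lamU) ^ 2
          = Real.exp (2 * c N) * ((π * w ^ 2 / lamU ^ 2) / (N:ℝ) ^ 2) by
        field_simp]
      rw [Real.mul_rpow (Real.exp_pos _).le (by positivity),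
          Real.div_rpow (by positivity) (by positivity),
          ← Real.rpow_natCast (N:ℝ) 2, ← Real.rpow_mul hNpos.le,
          ← Real.exp_mul]
      norm_num
      ring_nf
    rw [key]
    have hQ : (0:ℝ) < (π * w ^ 2 / lamU ^ 2) ^ ((1:ℝ)/3) :=
      Real.rpow_pos_of_pos (by positivity) _
    have hK : (0:ℝ) < Real.exp (-(2:ℝ)/3) := Real.exp_pos _
    have h13 : (0:ℝ) < (N:ℝ) ^ ((1:ℝ)/3) := Real.rpow_pos_of_pos hNpos _
    have h23 : (0:ℝ) < (N:ℝ) ^ ((2:ℝ)/3) := Real.rpow_pos_of_pos hNpos _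
    have hNN : (N:ℝ) ^ ((2:ℝ)/3) * (N:ℝ) ^ ((1:ℝ)/3) = (N:ℝ) := by
      rw [← Real.rpow_add hNpos]; norm_num
    rw [show (N:ℝ) ^ ((2:ℝ)/3) = (N:ℝ) / (N:ℝ) ^ ((1:ℝ)/3) from by
      rw [eq_div_iff h13.ne']; exact hNN]
    field_simp
    ring
  -- conclusion
  have hlim : Tendsto (fun N : ℕ => ((1 - p) + p / N) * Real.exp (2 * c N / 3))
      atTop (nhds ((1 - p) * 1)) := by
    have ha : Tendsto (fun N : ℕ => (1 - p) + p / N) atTop (nhds (1 - p)) := by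
      have h0 : Tendsto (fun N : ℕ => p / (N:ℝ)) atTop (nhds 0) :=
        tendsto_const_nhds.div_atTop tendsto_natCast_atTop_atTop
      simpa using tendsto_const_nhds.add h0
    have hb : Tendsto (fun N : ℕ => Real.exp (2 * c N / 3)) atTop (nhds 1) := by
      have : Tendsto (fun N : ℕ => 2 * c N / 3) atTop (nhds 0) := by
        have := (hctend.const_mul (2:ℝ)).div_const 3
        simpa using this
      simpa [Function.comp_def] using (Real.continuous_exp.tendsto 0).comp this
    exact ha.mul hb
  rw [mul_one] at hlim
  exact hlim.congr' (Filter.EventuallyEq.symm hratio)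
end

section
/- For every β ∈ (0,1] and every p ∈ [0,1], the quantity G^{type2}(p) := β^{−1/3} · (1 + (1−p)β) · (2^{2βp/(1+β(1−p))} / (1+β)²)^{1/3} satisfies G^{type2}(p) ≥ 1. -/
/-!
Put `s = 1 + β (1 - p) ≥ 1`, so that `β p = 1 + β - s` and
`3 log G = 3 log s + 2 ((1 + β)/s - 1) log 2 - log β - 2 log (1 + β)`.
The tangent-line bounds `log β ≤ β - 1`, `log (1 + β) ≤ log 2 + (β - 1)/2` and `log s ≥ 1 - 1/s`
turn `s · 3 log G ≥ 0` into `2 (1 - β) (s - log 2) + (s - 1) (3 - 4 log 2) ≥ 0`, which holds since `log 2 < 3/4 ≤ s`.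
-/

open Real

lemma Real.log_le_log_two_add_half_sub_one {x : ℝ} (hx : 0 < x) : log x ≤ log 2 + (x / 2 - 1) := by
  have h := log_le_sub_one_of_pos (half_pos hx)
  rw [log_div hx.ne' two_ne_zero] at h
  linarith

lemma log_add_two_mul_log_one_add_le {β s : ℝ} (hβ0 : 0 < β) (hβ1 : β ≤ 1) (hs : 1 ≤ s) :
    log β + 2 * log (1 + β) ≤ 3 * log s + 2 * ((1 + β) / s - 1) * log 2 := by
  have hs0 : 0 < s := by linarith
  have hβ := log_le_sub_one_of_pos hβ0
  have hβ' := log_le_log_two_add_half_sub_one (by linarith : 0 < 1 + β)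
  have hs' := one_sub_inv_le_log_of_pos hs0
  have hL : log 2 < 3 / 4 := by linarith [log_two_lt_d9]
  have hlin : 0 ≤ 2 * (1 - β) * (s - log 2) + (s - 1) * (3 - 4 * log 2) :=
    add_nonneg (mul_nonneg (mul_nonneg zero_le_two (by linarith)) (by linarith))
      (mul_nonneg (by linarith) (by linarith))
  have hdiv : 0 ≤ 5 - 2 * β - 3 / s + 2 * ((1 + β) / s) * log 2 - 4 * log 2 := by
    have : 5 - 2 * β - 3 / s + 2 * ((1 + β) / s) * log 2 - 4 * log 2
        = (2 * (1 - β) * (s - log 2) + (s - 1) * (3 - 4 * log 2)) / s := by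
      field_simp
      ring
    rw [this]
    positivity
  simp only [div_eq_mul_inv] at hdiv ⊢
  linarith

lemma one_le_gain {β s : ℝ} (hβ0 : 0 < β) (hβ1 : β ≤ 1) (hs : 1 ≤ s) :
    1 ≤ β ^ (-(1 : ℝ) / 3) * s *
      ((2 : ℝ) ^ (2 * ((1 + β) / s - 1)) / (1 + β) ^ 2) ^ ((1 : ℝ) / 3) := by
  have hs0 : 0 < s := by linarith
  have hpow : 0 < (2 : ℝ) ^ (2 * ((1 + β) / s - 1)) / (1 + β) ^ 2 := by positivity
  rw [← log_nonneg_iff (by positivity), log_mul (by positivity) (by positivity),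
    log_mul (by positivity) hs0.ne', log_rpow hβ0, log_rpow hpow,
    log_div (by positivity) (by positivity), log_rpow two_pos, log_pow]
  linarith [log_add_two_mul_log_one_add_le hβ0 hβ1 hs]

theorem gain_type2_ge_one_general
    (β p : ℝ) (hβ0 : 0 < β) (hβ1 : β ≤ 1) (hp1 : p ≤ 1) :
    1 ≤ β ^ (-(1 : ℝ) / 3) * (1 + (1 - p) * β) *
      ((2 : ℝ) ^ (2 * β * p / (1 + β * (1 - p))) / (1 + β) ^ 2) ^ ((1 : ℝ) / 3) := by
  have hs : 1 ≤ 1 + β * (1 - p) := by nlinarith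
  have hexp : 2 * β * p / (1 + β * (1 - p)) = 2 * ((1 + β) / (1 + β * (1 - p)) - 1) := by
    field_simp
    ring
  rw [hexp, show 1 + (1 - p) * β = 1 + β * (1 - p) by ring]
  exact one_le_gain hβ0 hβ1 hs

/-- The sharing gain for the smaller operator,
`G^{type2}(p) = β^{−1/3} (1+(1−p)β) (2^{2βp/(1+β(1−p))}/(1+β)²)^{1/3}`,
is at least `1` for every `β ∈ (0,1]` and `p ∈ [0,1]`. -/
theorem gain_type2_ge_one
    (β p : ℝ) (hβ0 : 0 < β) (hβ1 : β ≤ 1) (hp0 : 0 ≤ p) (hp1 : p ≤ 1) :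
    1 ≤ β ^ (-(1 : ℝ) / 3) * (1 + (1 - p) * β) *
      ((2 : ℝ) ^ (2 * β * p / (1 + β * (1 - p))) / (1 + β) ^ 2) ^ ((1 : ℝ) / 3) :=
  gain_type2_ge_one_general β p hβ0 hβ1 hp1
end

section
/- For every β ∈ (0,1], the function p ↦ (1 + (1−p)β) · (2^{2βp/(1+β(1−p))})^{1/3} is strictly decreasing on [0,1]; equivalently, the optimal expected strength under sharing for N = 2, E[S̃^{opt}|N=2] = (3/2) e^{−2/3} (1+(1−p)β) λ_BS (2^{2βp/(1+β(1−p))} π w² / ((1+β)² λ_U²))^{1/3}, is strictly decreasing in the co-location factor p. -/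
open Real

private lemma aux_hasDerivAt (β : ℝ) (p : ℝ) (hD : 1 + β * (1 - p) ≠ 0) :
    HasDerivAt (fun p : ℝ => (1 + (1 - p) * β) *
        (2 : ℝ) ^ (2 * β * p / (1 + β * (1 - p)) * (1 / 3)))
      ((-β) * (2 : ℝ) ^ (2 * β * p / (1 + β * (1 - p)) * (1 / 3)) +
        (1 + (1 - p) * β) *
          ((2 : ℝ) ^ (2 * β * p / (1 + β * (1 - p)) * (1 / 3)) * Real.log 2 *
            ((2 * β * (1 + β * (1 - p)) - 2 * β * p * (-β)) / (1 + β * (1 - p)) ^ 2 * (1 / 3)))) p := by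
  have h1 : HasDerivAt (fun p : ℝ => 1 + (1 - p) * β) (-β) p := by
    have := (((hasDerivAt_const p (1:ℝ)).sub (hasDerivAt_id p)).mul_const β).const_add 1
    simpa using this
  have hnum : HasDerivAt (fun p : ℝ => 2 * β * p) (2 * β) p := by
    simpa using (hasDerivAt_id p).const_mul (2 * β)
  have hden : HasDerivAt (fun p : ℝ => 1 + β * (1 - p)) (-β) p := by
    have := (((hasDerivAt_const p (1:ℝ)).sub (hasDerivAt_id p)).const_mul β).const_add 1
    simpa using this
  have hq : HasDerivAt (fun p : ℝ => 2 * β * p / (1 + β * (1 - p)))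
      ((2 * β * (1 + β * (1 - p)) - 2 * β * p * (-β)) / (1 + β * (1 - p)) ^ 2) p :=
    hnum.div hden hD
  have hq3 := hq.mul_const (1 / 3 : ℝ)
  have hr : HasDerivAt (fun p : ℝ => (2 : ℝ) ^ (2 * β * p / (1 + β * (1 - p)) * (1 / 3)))
      ((2 : ℝ) ^ (2 * β * p / (1 + β * (1 - p)) * (1 / 3)) * Real.log 2 *
        ((2 * β * (1 + β * (1 - p)) - 2 * β * p * (-β)) / (1 + β * (1 - p)) ^ 2 * (1 / 3))) p := by
    have := (Real.hasStrictDerivAt_const_rpow (by norm_num : (0:ℝ) < 2)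
      (2 * β * p / (1 + β * (1 - p)) * (1 / 3))).hasDerivAt.comp p hq3
    simpa [mul_assoc, Function.comp_def] using this
  exact h1.mul hr

private lemma aux_strictAnti (β : ℝ) (hβ0 : 0 < β) (hβ1 : β ≤ 1) :
    StrictAntiOn
      (fun p : ℝ => (1 + (1 - p) * β) *
        (2 : ℝ) ^ (2 * β * p / (1 + β * (1 - p)) * (1 / 3)))
      (Set.Icc 0 1) := by
  have hDpos : ∀ p : ℝ, p ≤ 1 → (0:ℝ) < 1 + β * (1 - p) := by
    intro p hp
    nlinarith
  apply strictAntiOn_of_deriv_neg (convex_Icc 0 1)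
  · intro p hp
    exact (aux_hasDerivAt β p (hDpos p hp.2).ne').continuousAt.continuousWithinAt
  · intro p hp
    rw [interior_Icc] at hp
    have hD := hDpos p hp.2.le
    rw [(aux_hasDerivAt β p hD.ne').deriv]
    set D : ℝ := 1 + β * (1 - p) with hDdef
    have hE : (0:ℝ) < (2 : ℝ) ^ (2 * β * p / D * (1 / 3)) := Real.rpow_pos_of_pos (by norm_num) _
    have hlog : Real.log 2 < 0.6931471808 := Real.log_two_lt_d9
    have hlogpos : (0:ℝ) < Real.log 2 := Real.log_pos (by norm_num)
    have hD1 : (1:ℝ) ≤ D := by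
      have : 0 ≤ β * (1 - p) := mul_nonneg hβ0.le (by linarith [hp.2])
      linarith
    -- derivative = E * β * (-1 + 2*(1+β)*log 2 / (3*D))
    have key : 2 * β * (1 + β * (1 - p)) - 2 * β * p * (-β) = 2 * β * (1 + β) := by ring
    have hnum : 2 * (1 + β) * Real.log 2 < 3 * D := by nlinarith
    have heq : (-β) * (2 : ℝ) ^ (2 * β * p / D * (1 / 3)) +
        (1 + (1 - p) * β) *
          ((2 : ℝ) ^ (2 * β * p / D * (1 / 3)) * Real.log 2 *
            ((2 * β * (1 + β * (1 - p)) - 2 * β * p * (-β)) / D ^ 2 * (1 / 3)))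
        = (2 : ℝ) ^ (2 * β * p / D * (1 / 3)) * β *
            ((2 * (1 + β) * Real.log 2 - 3 * D) / (3 * D)) := by
      rw [key]
      have hDne : D ≠ 0 := (hDpos p hp.2.le).ne'
      have h1pβ : 1 + (1 - p) * β = D := by rw [hDdef]; ring
      rw [h1pβ]
      field_simp
      ring
    rw [heq]
    apply mul_neg_of_pos_of_neg (mul_pos hE hβ0)
    apply div_neg_of_neg_of_pos (by linarith) (by linarith)

/-- For every `β ∈ (0,1]`, the function
`p ↦ (1+(1−p)β) (2^{2βp/(1+β(1−p))})^{1/3}` is strictly decreasing on `[0,1]`;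
equivalently, the optimal expected strength under sharing for `N = 2`,
`E[S̃^{opt}|N=2] = (3/2) e^{−2/3} (1+(1−p)β) λ_BS (2^{2βp/(1+β(1−p))} π w²/((1+β)² λ_U²))^{1/3}`,
is strictly decreasing in the co-location factor `p`. -/
theorem optimal_strength_strictly_decreasing_in_p
    (β : ℝ) (hβ0 : 0 < β) (hβ1 : β ≤ 1)
    (lamBS lamU w : ℝ) (hBS : 0 < lamBS) (hU : 0 < lamU) (hw : 0 < w) :
    StrictAntiOn
      (fun p : ℝ => (1 + (1 - p) * β) *
        ((2 : ℝ) ^ (2 * β * p / (1 + β * (1 - p)))) ^ ((1 : ℝ) / 3))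
      (Set.Icc 0 1) ∧
    StrictAntiOn
      (fun p : ℝ => 3 / 2 * Real.exp (-(2 : ℝ) / 3) * (1 + (1 - p) * β) * lamBS *
        ((2 : ℝ) ^ (2 * β * p / (1 + β * (1 - p))) * π * w ^ 2 /
          ((1 + β) ^ 2 * lamU ^ 2)) ^ ((1 : ℝ) / 3))
      (Set.Icc 0 1) := by
  have key := aux_strictAnti β hβ0 hβ1
  have hrw : ∀ p : ℝ, ((2 : ℝ) ^ (2 * β * p / (1 + β * (1 - p)))) ^ ((1 : ℝ) / 3)
      = (2 : ℝ) ^ (2 * β * p / (1 + β * (1 - p)) * (1 / 3)) := fun p => by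
    rw [← Real.rpow_mul (by norm_num : (0:ℝ) ≤ 2)]
  constructor
  · have : (fun p : ℝ => (1 + (1 - p) * β) *
        ((2 : ℝ) ^ (2 * β * p / (1 + β * (1 - p)))) ^ ((1 : ℝ) / 3))
        = (fun p : ℝ => (1 + (1 - p) * β) *
        (2 : ℝ) ^ (2 * β * p / (1 + β * (1 - p)) * (1 / 3))) := funext fun p => by rw [hrw p]
    rw [this]; exact key
  · set C : ℝ := (π * w ^ 2 / ((1 + β) ^ 2 * lamU ^ 2)) ^ ((1:ℝ)/3) with hC
    have hCpos : 0 < C := Real.rpow_pos_of_pos (by positivity) _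
    have hK : 0 < 3 / 2 * Real.exp (-(2 : ℝ) / 3) * lamBS * C := by positivity
    have hfun : ∀ p : ℝ, 3 / 2 * Real.exp (-(2 : ℝ) / 3) * (1 + (1 - p) * β) * lamBS *
        ((2 : ℝ) ^ (2 * β * p / (1 + β * (1 - p))) * π * w ^ 2 /
          ((1 + β) ^ 2 * lamU ^ 2)) ^ ((1 : ℝ) / 3)
        = (3 / 2 * Real.exp (-(2 : ℝ) / 3) * lamBS * C) *
          ((1 + (1 - p) * β) * (2 : ℝ) ^ (2 * β * p / (1 + β * (1 - p)) * (1 / 3))) := by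
      intro p
      have h2 : (0:ℝ) ≤ (2 : ℝ) ^ (2 * β * p / (1 + β * (1 - p))) :=
        (Real.rpow_pos_of_pos (by norm_num) _).le
      have : (2 : ℝ) ^ (2 * β * p / (1 + β * (1 - p))) * π * w ^ 2 /
          ((1 + β) ^ 2 * lamU ^ 2)
          = (2 : ℝ) ^ (2 * β * p / (1 + β * (1 - p))) *
            (π * w ^ 2 / ((1 + β) ^ 2 * lamU ^ 2)) := by ring
      rw [this, Real.mul_rpow h2 (by positivity), ← hC, hrw p]
      ring
    intro a ha b hb hab
    simp only [hfun]
    exact mul_lt_mul_of_pos_left (key ha hb hab) hK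
end

section
/- For every β ∈ (0,1], define G^{type1}(p) := (1 + (1−p)β) · (2^{2βp/(1+β(1−p))} / (1+β)²)^{1/3} for p ∈ [0,1]. Then G^{type1}(0) = (1+β)^{1/3} ≥ 1, G^{type1}(1) ≤ 1, and there exists a unique p* ∈ [0,1] such that G^{type1}(p) ≥ 1 for all p ≤ p* and G^{type1}(p) < 1 for all p > p*. -/
open Real

private lemma two_rpow_le_one_add (β : ℝ) (h0 : 0 ≤ β) (h1 : β ≤ 1) : (2:ℝ) ^ β ≤ 1 + β := by
  have hlog : β * Real.log 2 ≤ Real.log (1 + β) := by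
    have hc := strictConcaveOn_log_Ioi.concaveOn
    have := hc.2 (Set.mem_Ioi.mpr one_pos) (Set.mem_Ioi.mpr two_pos)
      (by linarith : (0:ℝ) ≤ 1 - β) h0 (by ring)
    rw [show (1:ℝ)+β = 1-β+β*2 by ring]
    simpa [Real.log_one, smul_eq_mul] using this
  calc (2:ℝ) ^ β = Real.exp (β * Real.log 2) := by
        rw [Real.rpow_def_of_pos two_pos]; ring_nf
    _ ≤ Real.exp (Real.log (1 + β)) := Real.exp_le_exp.mpr hlog
    _ = 1 + β := Real.exp_log (by linarith)

private lemma Fanti (β : ℝ) (hβ0 : 0 < β) (hβ1 : β ≤ 1) :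
    StrictAntiOn (fun p : ℝ => (1 + (1 - p) * β) *
      ((2 : ℝ) ^ (2 * β * p / (1 + β * (1 - p))) / (1 + β) ^ 2) ^ ((1 : ℝ) / 3))
      (Set.Icc 0 1) := by
  have hb : (0:ℝ) < 1 + β := by linarith
  have hc : (0:ℝ) < (1+β)^2 := pow_pos hb 2
  apply strictAntiOn_of_deriv_neg (convex_Icc 0 1)
  · apply ContinuousOn.mul (by fun_prop)
    apply ContinuousOn.rpow_const
    · apply ContinuousOn.div_const
      apply (continuous_iff_continuousAt.mpr
        (fun x => Real.continuousAt_const_rpow (two_ne_zero))).comp_continuousOn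
      apply ContinuousOn.div (by fun_prop) (by fun_prop)
      intro x hx
      have := hx.2
      nlinarith [hx.1, hx.2, mul_nonneg hβ0.le (sub_nonneg.mpr hx.2)]
    · intro x hx
      left
      exact ne_of_gt (div_pos (rpow_pos_of_pos two_pos _) hc)
  · intro p hp
    rw [interior_Icc] at hp
    obtain ⟨hp0, hp1⟩ := hp
    have hq1 : (1:ℝ) ≤ 1 + β * (1 - p) := by nlinarith
    have hq : (0:ℝ) < 1 + β * (1 - p) := by linarith
    have hqne : (1:ℝ) + β * (1 - p) ≠ 0 := ne_of_gt hq
    set Y : ℝ := (2 : ℝ) ^ (2 * β * p / (1 + β * (1 - p))) / (1 + β) ^ 2 with hYdef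
    have hY : 0 < Y := div_pos (rpow_pos_of_pos two_pos _) hc
    have hZ : 0 < Y ^ ((1:ℝ)/3) := rpow_pos_of_pos hY _
    have hA : HasDerivAt (fun p : ℝ => 1 + (1 - p) * β) (-β) p := by
      simpa using (((hasDerivAt_id p).const_sub 1).mul_const β).const_add 1
    have hQ : HasDerivAt (fun p : ℝ => 1 + β * (1 - p)) (-β) p := by
      simpa using (((hasDerivAt_id p).const_sub 1).const_mul β).const_add 1
    have hnum : HasDerivAt (fun p : ℝ => 2 * β * p) (2*β) p := by
      simpa using (hasDerivAt_id p).const_mul (2*β)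
    have hu : HasDerivAt (fun p : ℝ => 2 * β * p / (1 + β * (1 - p)))
        (2*β*(1+β)/(1 + β * (1 - p))^2) p := by
      have h : HasDerivAt (fun p : ℝ => 2 * β * p / (1 + β * (1 - p))) ((2*β*(1+β*(1-p)) - 2*β*p*(-β))/(1+β*(1-p))^2) p := hnum.div hQ hqne
      convert h using 1
      ring
    have h2u : HasDerivAt (fun p : ℝ => (2:ℝ) ^ (2 * β * p / (1 + β * (1 - p))))
        (((2:ℝ) ^ (2 * β * p / (1 + β * (1 - p))) * Real.log 2) *
          (2*β*(1+β)/(1 + β * (1 - p))^2)) p := by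
      exact (Real.hasStrictDerivAt_const_rpow two_pos _).hasDerivAt.comp p hu
    have hX : HasDerivAt (fun p : ℝ => (2:ℝ) ^ (2 * β * p / (1 + β * (1 - p))) / (1+β)^2)
        ((((2:ℝ) ^ (2 * β * p / (1 + β * (1 - p))) * Real.log 2) *
          (2*β*(1+β)/(1 + β * (1 - p))^2)) / (1+β)^2) p := h2u.div_const _
    have hB := hX.rpow_const (p := (1:ℝ)/3) (Or.inl (ne_of_gt hY))
    have hF := hA.mul hB
    rw [HasDerivAt.deriv (f := fun p : ℝ => (1 + (1 - p) * β) * ((2 : ℝ) ^ (2 * β * p / (1 + β * (1 - p))) / (1 + β) ^ 2) ^ ((1 : ℝ) / 3)) hF]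
    have e1 : Y ^ ((1:ℝ)/3 - 1) = Y ^ ((1:ℝ)/3) / Y := by
      rw [Real.rpow_sub hY, Real.rpow_one]
    have key : -β * Y ^ ((1:ℝ)/3) + (1 + (1 - p) * β) *
        ((((2:ℝ) ^ (2 * β * p / (1 + β * (1 - p))) * Real.log 2) *
          (2*β*(1+β)/(1 + β * (1 - p))^2)) / (1+β)^2 * ((1:ℝ)/3) * Y ^ ((1:ℝ)/3 - 1))
        = Y ^ ((1:ℝ)/3) * (2*β*(1+β)*Real.log 2/(3*(1 + β * (1 - p))) - β) := by
      rw [e1]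
      have h2Y : (2:ℝ) ^ (2 * β * p / (1 + β * (1 - p))) = Y * (1+β)^2 := by
        rw [hYdef]; field_simp
      rw [h2Y]
      field_simp
      ring
    rw [key]
    apply mul_neg_of_pos_of_neg hZ
    rw [sub_neg, div_lt_iff₀ (by positivity)]
    have hpr : (0:ℝ) < 2*β*(1+β) := by nlinarith [mul_pos hβ0 hb]
    have hlt := mul_lt_mul_of_pos_left Real.log_two_lt_d9 hpr
    nlinarith [mul_nonneg hβ0.le (by linarith : (0:ℝ) ≤ β * (1 - p)),
      mul_nonneg hβ0.le (by linarith : (0:ℝ) ≤ 1 - β)]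

/-- For the sharing gain of operator 1,
`G^{type1}(p) = (1+(1−p)β)(2^{2βp/(1+β(1−p))}/(1+β)²)^{1/3}`: it equals
`(1+β)^{1/3} ≥ 1` at `p = 0`, is at most `1` at `p = 1`, and there is a unique
threshold `p* ∈ [0,1]` with `G^{type1} ≥ 1` on `[0, p*]` and `< 1` beyond `p*`. -/
theorem gain_type1_threshold
    (β : ℝ) (hβ0 : 0 < β) (hβ1 : β ≤ 1)
    (G : ℝ → ℝ)
    (hG : ∀ p : ℝ, G p = (1 + (1 - p) * β) *
      ((2 : ℝ) ^ (2 * β * p / (1 + β * (1 - p))) / (1 + β) ^ 2) ^ ((1 : ℝ) / 3)) :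
    G 0 = (1 + β) ^ ((1 : ℝ) / 3) ∧ 1 ≤ (1 + β) ^ ((1 : ℝ) / 3) ∧ G 1 ≤ 1 ∧
      ∃! pstar : ℝ, pstar ∈ Set.Icc (0 : ℝ) 1 ∧
        (∀ p ∈ Set.Icc (0 : ℝ) 1, p ≤ pstar → 1 ≤ G p) ∧
        (∀ p ∈ Set.Icc (0 : ℝ) 1, pstar < p → G p < 1) := by
  have hb : (0:ℝ) < 1 + β := by linarith
  have hc : (0:ℝ) < (1+β)^2 := pow_pos hb 2
  -- value at 0
  have hG0 : G 0 = (1 + β) ^ ((1 : ℝ) / 3) := by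
    rw [hG 0]
    simp only [sub_zero, one_mul, mul_zero, zero_div, Real.rpow_zero]
    have e2 : (((1:ℝ)+β)^2)⁻¹ = (1+β) ^ (-2:ℝ) := by
      rw [Real.rpow_neg hb.le, ← Real.rpow_natCast (1+β) 2]
      norm_num
    rw [one_div, e2, ← Real.rpow_mul hb.le]
    nth_rewrite 1 [show (1:ℝ)+β = (1+β)^(1:ℝ) from (Real.rpow_one _).symm]
    rw [← Real.rpow_add hb]
    norm_num
  have h1le : 1 ≤ (1 + β) ^ ((1 : ℝ) / 3) :=
    Real.one_le_rpow (by linarith) (by norm_num)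
  -- value at 1
  have hG1 : G 1 ≤ 1 := by
    rw [hG 1]
    simp only [sub_self, zero_mul, add_zero, mul_one, mul_zero, one_mul, div_one]
    apply Real.rpow_le_one (div_nonneg (Real.rpow_pos_of_pos two_pos _).le hc.le) ?_ (by norm_num)
    rw [div_le_one hc]
    have h2β := two_rpow_le_one_add β hβ0.le hβ1
    calc (2:ℝ)^(2*β) = ((2:ℝ)^β)^2 := by
          rw [← Real.rpow_natCast ((2:ℝ)^β) 2, ← Real.rpow_mul (by norm_num : (0:ℝ) ≤ 2)]
          norm_num [mul_comm]
      _ ≤ (1+β)^2 := by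
          have h2nn := Real.rpow_nonneg (by norm_num : (0:ℝ) ≤ 2) β
          nlinarith
  -- antitone
  have hanti : StrictAntiOn G (Set.Icc 0 1) := by
    have := Fanti β hβ0 hβ1
    intro x hx y hy hxy
    rw [hG x, hG y]
    exact this hx hy hxy
  refine ⟨hG0, h1le, hG1, ?_⟩
  -- intermediate value
  have hcont : ContinuousOn G (Set.Icc 0 1) := by
    have hFcont : ContinuousOn (fun p : ℝ => (1 + (1 - p) * β) *
        ((2 : ℝ) ^ (2 * β * p / (1 + β * (1 - p))) / (1 + β) ^ 2) ^ ((1 : ℝ) / 3))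
        (Set.Icc 0 1) := by
      apply ContinuousOn.mul (by fun_prop)
      apply ContinuousOn.rpow_const
      · apply ContinuousOn.div_const
        apply (continuous_iff_continuousAt.mpr
          (fun x => Real.continuousAt_const_rpow (two_ne_zero))).comp_continuousOn
        apply ContinuousOn.div (by fun_prop) (by fun_prop)
        intro x hx
        nlinarith [hx.1, hx.2, mul_nonneg hβ0.le (sub_nonneg.mpr hx.2)]
      · intro x hx
        left
        exact ne_of_gt (div_pos (Real.rpow_pos_of_pos two_pos _) hc)
    exact hFcont.congr (fun x _ => hG x)
  have hmem : (1:ℝ) ∈ Set.Icc (G 1) (G 0) := ⟨hG1, by rw [hG0]; exact h1le⟩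
  obtain ⟨pstar, hpmem, hpeq⟩ := intermediate_value_Icc' zero_le_one hcont hmem
  refine ⟨pstar, ⟨hpmem, ?_, ?_⟩, ?_⟩
  · intro p hp hple
    rcases eq_or_lt_of_le hple with h | h
    · rw [h, hpeq]
    · rw [← hpeq]
      exact (hanti hp hpmem h).le
  · intro p hp hlt
    rw [← hpeq]
    exact hanti hpmem hp hlt
  · rintro y ⟨hy, hy1, hy2⟩
    by_contra hne
    rcases lt_or_gt_of_ne hne with h | h
    · have := hy2 pstar hpmem h
      rw [hpeq] at this
      exact lt_irrefl 1 this
    · have h1 := hy1 y hy le_rfl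
      have h2 := hanti hpmem hy h
      rw [hpeq] at h2
      linarith
end

section
/- Fix p ∈ [0,1] and an integer N ≥ 2. Let B ~ Binomial(N−1, p), let s = (1−p)(N−1)/(1+(1−p)(N−1)), and let C be a positive-integer-valued random variable with P(C = 1) = s + (1−s)P(B = 0) and P(C = i) = (1−s)P(B = i−1) for i ≥ 2. Then E[log C] ≤ log(1 + p(N−1)) / (1 + (1−p)(N−1)). -/
open MeasureTheory

lemma binom_sum (n : ℕ) (p q : ℝ) (hpq : p + q = 1) :
    ∑ j ∈ Finset.range (n+1), (n.choose j : ℝ) * p ^ j * q ^ (n - j) = 1 := by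
  calc ∑ j ∈ Finset.range (n+1), (n.choose j : ℝ) * p ^ j * q ^ (n - j)
      = ∑ j ∈ Finset.range (n+1), p ^ j * q ^ (n - j) * (n.choose j : ℝ) := by
        apply Finset.sum_congr rfl; intros; ring
    _ = (p + q) ^ n := (add_pow p q n).symm
    _ = 1 := by rw [hpq, one_pow]

lemma binom_mean (m : ℕ) (p q : ℝ) (hpq : p + q = 1) :
    ∑ j ∈ Finset.range (m+2), (j : ℝ) * ((m+1).choose j : ℝ) * p ^ j * q ^ (m+1-j)
      = (m+1 : ℝ) * p := by
  rw [Finset.sum_range_succ']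
  have key : ∀ j ∈ Finset.range (m+1),
      ((j+1 : ℕ) : ℝ) * ((m+1).choose (j+1) : ℝ) * p ^ (j+1) * q ^ (m+1-(j+1))
        = ((m+1:ℝ) * p) * ((m.choose j : ℝ) * p ^ j * q ^ (m - j)) := by
    intro j hj
    have h := Nat.add_one_mul_choose_eq m j
    have h2 : ((m:ℝ)+1) * (m.choose j : ℝ) = ((m+1).choose (j+1) : ℝ) * ((j:ℝ)+1) := by
      exact_mod_cast congrArg (Nat.cast : ℕ → ℝ) h
    have h3 : m + 1 - (j + 1) = m - j := by omega
    rw [h3]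
    push_cast
    rw [pow_succ]
    linear_combination (p ^ j * p * q ^ (m - j)) * h2.symm
  rw [Finset.sum_congr rfl key, ← Finset.mul_sum, binom_sum m p q hpq]
  simp

lemma binom_jensen (m : ℕ) (p q : ℝ) (hp0 : 0 ≤ p) (hq0 : 0 ≤ q) (hpq : p + q = 1) :
    ∑ j ∈ Finset.range (m+2), ((m+1).choose j : ℝ) * p ^ j * q ^ (m+1-j) * Real.log (1 + j)
      ≤ Real.log (1 + p * ((m:ℝ)+1)) := by
  set w : ℕ → ℝ := fun j => ((m+1).choose j : ℝ) * p ^ j * q ^ (m+1-j) with hw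
  have hw0 : ∀ j ∈ Finset.range (m+2), 0 ≤ w j := by
    intro j hj
    exact mul_nonneg (mul_nonneg (Nat.cast_nonneg _) (pow_nonneg hp0 _)) (pow_nonneg hq0 _)
  have hw1 : ∑ j ∈ Finset.range (m+2), w j = 1 := binom_sum (m+1) p q hpq
  have hmem : ∀ j ∈ Finset.range (m+2), (1 + (j:ℝ)) ∈ Set.Ioi (0:ℝ) := by
    intro j hj
    have : (0:ℝ) ≤ j := Nat.cast_nonneg j
    simp only [Set.mem_Ioi]; linarith
  have hJ := strictConcaveOn_log_Ioi.concaveOn.le_map_sum hw0 hw1 hmem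
  have hsum : ∑ j ∈ Finset.range (m+2), w j • (1 + (j:ℝ)) = 1 + p * ((m:ℝ)+1) := by
    have : ∀ j ∈ Finset.range (m+2), w j • (1 + (j:ℝ))
        = w j + (j:ℝ) * ((m+1).choose j : ℝ) * p ^ j * q ^ (m+1-j) := by
      intro j hj; simp only [smul_eq_mul, hw]; ring
    rw [Finset.sum_congr rfl this, Finset.sum_add_distrib, hw1, binom_mean m p q hpq]
    ring
  rw [hsum] at hJ
  calc ∑ j ∈ Finset.range (m+2), w j * Real.log (1 + j)
      = ∑ j ∈ Finset.range (m+2), w j • Real.log (1 + j) := by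
        simp [smul_eq_mul]
    _ ≤ _ := hJ

lemma integral_log_eq {Ω : Type*} [MeasurableSpace Ω] (μ : Measure Ω) [IsProbabilityMeasure μ]
    (C : Ω → ℕ) (hC : Measurable C) (N : ℕ)
    (hnull : ∀ i, N < i → μ {ω | C ω = i} = 0) :
    ∫ ω, Real.log (C ω) ∂μ
      = ∑ i ∈ Finset.range (N+1), (μ {ω | C ω = i}).toReal * Real.log i := by
  have hmeas : ∀ i : ℕ, MeasurableSet {ω | C ω = i} := fun i =>
    hC (measurableSet_singleton i)
  set g : Ω → ℝ := fun ω =>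
    ∑ i ∈ Finset.range (N+1), ({ω | C ω = i}).indicator (fun _ => Real.log i) ω with hg
  have hae : ∀ᵐ ω ∂μ, Real.log (C ω) = g ω := by
    have hE : μ {ω | N < C ω} = 0 := by
      refine measure_mono_null ?_ (measure_iUnion_null
        (s := fun i : ℕ => {ω | C ω = N + 1 + i}) fun i => hnull _ (by omega))
      intro ω hω
      simp only [Set.mem_setOf_eq] at hω
      simp only [Set.mem_iUnion, Set.mem_setOf_eq]
      exact ⟨C ω - (N+1), by omega⟩
    filter_upwards [measure_eq_zero_iff_ae_notMem.mp hE] with ω hω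
    simp only [Set.mem_setOf_eq, not_lt] at hω
    have hmem : C ω ∈ Finset.range (N+1) := Finset.mem_range.mpr (by omega)
    simp only [hg, Set.indicator_apply, Set.mem_setOf_eq, Finset.sum_ite_eq, hmem, if_true]
  rw [integral_congr_ae hae, hg,
    integral_finset_sum _ (fun (i : ℕ) _ => (integrable_const (Real.log i)).indicator (hmeas i))]
  apply Finset.sum_congr rfl
  intro i _
  rw [integral_indicator_const _ (hmeas i), smul_eq_mul, measureReal_def, mul_comm]

/-- Let `B ~ Binomial(N−1, p)`, `s = (1−p)(N−1)/(1+(1−p)(N−1))`, and let `C` be a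
positive-integer-valued random variable with `P(C = 1) = s + (1−s)P(B = 0)` and
`P(C = i) = (1−s)P(B = i−1)` for `i ≥ 2`. Then
`E[log C] ≤ log(1 + p(N−1))/(1+(1−p)(N−1))`. -/
theorem expected_log_resources_upper_bound
    {Ω : Type*} [MeasurableSpace Ω] (μ : Measure Ω) [IsProbabilityMeasure μ]
    (p : ℝ) (hp0 : 0 ≤ p) (hp1 : p ≤ 1) (N : ℕ) (hN : 2 ≤ N)
    (s : ℝ) (hs : s = (1 - p) * ((N : ℝ) - 1) / (1 + (1 - p) * ((N : ℝ) - 1)))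
    (C : Ω → ℕ) (hC : Measurable C) (hCpos : ∀ ω, 1 ≤ C ω)
    (hone : (μ {ω | C ω = 1}).toReal = s + (1 - s) * (1 - p) ^ (N - 1))
    (hrest : ∀ i : ℕ, 2 ≤ i →
      (μ {ω | C ω = i}).toReal =
        (1 - s) * ((N - 1).choose (i - 1) : ℝ) * p ^ (i - 1) * (1 - p) ^ (N - i)) :
    ∫ ω, Real.log (C ω) ∂μ ≤
      Real.log (1 + p * ((N : ℝ) - 1)) / (1 + (1 - p) * ((N : ℝ) - 1)) := by
  obtain ⟨m, rfl⟩ : ∃ m, N = m + 2 := ⟨N - 2, by omega⟩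
  set q : ℝ := 1 - p with hq
  have hq0 : 0 ≤ q := by linarith
  have hpq : p + q = 1 := by ring
  have hNr : ((m + 2 : ℕ) : ℝ) - 1 = (m : ℝ) + 1 := by push_cast; ring
  set D : ℝ := 1 + (1 - p) * (((m + 2 : ℕ) : ℝ) - 1) with hD
  have hDpos : 0 < D := by
    rw [hD, hNr]
    have : (0:ℝ) ≤ (1 - p) * ((m:ℝ) + 1) :=
      mul_nonneg (by linarith) (by positivity)
    linarith
  have h1s : 1 - s = 1 / D := by
    have hDne : (1:ℝ) + (1 - p) * ((m:ℝ)+1) ≠ 0 := by rw [← hNr, ← hD]; exact hDpos.ne'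
    rw [hs, hD, hNr]; rw [eq_div_iff hDne, sub_mul, div_mul_cancel₀ _ hDne, hq]; ring
  have h1s0 : 0 ≤ 1 - s := by rw [h1s]; positivity
  -- null sets beyond N
  have hnull : ∀ i, m + 2 < i → μ {ω | C ω = i} = 0 := by
    intro i hi
    have h2 : 2 ≤ i := by omega
    have := hrest i h2
    have hch : (m + 2 - 1).choose (i - 1) = 0 :=
      Nat.choose_eq_zero_of_lt (by omega)
    rw [hch] at this
    simp only [Nat.cast_zero, mul_zero, zero_mul] at this
    have hfin : μ {ω | C ω = i} ≠ ⊤ := measure_ne_top μ _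
    exact (ENNReal.toReal_eq_zero_iff _).mp this |>.resolve_right hfin
  rw [integral_log_eq μ C hC (m+2) hnull]
  -- peel off i = 0
  rw [Finset.sum_range_succ']
  simp only [Nat.cast_zero, Real.log_zero, mul_zero, add_zero]
  -- rewrite as (1-s) * weighted sum
  have hterm : ∀ i ∈ Finset.range (m+2),
      (μ {ω | C ω = i + 1}).toReal * Real.log ((i + 1 : ℕ) : ℝ)
        = (1 - s) * (((m+1).choose i : ℝ) * p ^ i * q ^ (m+1-i) * Real.log (1 + i)) := by
    intro i hi
    rcases Nat.eq_zero_or_pos i with h0 | h1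
    · subst h0
      simp [Real.log_one]
    · have h2 : 2 ≤ i + 1 := by omega
      have := hrest (i+1) h2
      have e1 : m + 2 - 1 = m + 1 := by omega
      have e2 : i + 1 - 1 = i := by omega
      have e3 : m + 2 - (i + 1) = m + 1 - i := by omega
      rw [e1, e2, e3] at this
      rw [this]
      have : ((i:ℝ) + 1) = (1 + (i:ℝ)) := by ring
      push_cast
      rw [this]
      ring
  rw [Finset.sum_congr rfl hterm, ← Finset.mul_sum]
  have hJ := binom_jensen m p q hp0 hq0 hpq
  have : (1 - s) * (∑ j ∈ Finset.range (m+2),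
      ((m+1).choose j : ℝ) * p ^ j * q ^ (m+1-j) * Real.log (1 + j))
        ≤ (1 - s) * Real.log (1 + p * ((m:ℝ)+1)) :=
    mul_le_mul_of_nonneg_left hJ h1s0
  refine this.trans ?_
  exact le_of_eq (by rw [h1s, hNr]; ring)
end
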